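/- (Cut-free completeness of GLS_seq.) Let Ψ ⇛ Φ be a second-level sequent. If Ψ ⇛ Φ is not cut-free provable in GLS_seq, then there exist a GL-model ⟨W,R,V⟩ and an infinitely descending sequence w₁ R⁻¹ w₂ R⁻¹ w₃ ⋯ in W such that the sequent Ψ ⇛ Φ is false at w_i for every i. Equivalently, if for every GL-model and every infinitely descending sequence there is some i at which Ψ ⇛ Φ is true, then Ψ ⇛ Φ is cut-free provable in GLS_seq. -/
import Mathlib


/-- Modal formulas: propositional variables, ⊥, →, □. -/
inductive Formula : Type
  | var : ℕ → Formula
  | bot : Formula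
  | imp : Formula → Formula → Formula
  | box : Formula → Formula
deriving DecidableEq

/-- Levels of sequents in GLS_seq: first level (⇒) and second level (⇛). -/
inductive SeqLevel : Type
  | one
  | two
deriving DecidableEq

/-- The set of subformulas of a formula. -/
def Formula.subf : Formula → Finset Formula
  | .var p => {.var p}
  | .bot => {.bot}
  | .imp φ ψ => insert (.imp φ ψ) (φ.subf ∪ ψ.subf)
  | .box φ => insert (.box φ) φ.subf

/-- SF(Ψ,Φ): all subformulas of formulas in Ψ ∪ Φ. -/
def SF (Ψ Φ : Finset Formula) : Finset Formula := (Ψ ∪ Φ).biUnion Formula.subf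

def Formula.isBox : Formula → Bool
  | .box _ => true
  | _ => false

def Formula.unbox : Formula → Formula
  | .box φ => φ
  | φ => φ

/-- Θ_□ = {φ : □φ ∈ Θ}. -/
def boxInv (Θ : Finset Formula) : Finset Formula :=
  (Θ.filter fun ψ => ψ.isBox).image Formula.unbox

/-- The sequent calculus GLS_seq, on sequents of two levels.  The Bool parameter
records whether the cut rule may be used: `GLSSeq true` is provability in GLS_seq,
`GLSSeq false` is cut-free provability.  The first-level fragment is exactly GL_seq. -/
inductive GLSSeq : Bool → SeqLevel → Finset Formula → Finset Formula → Prop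
  | init (c lv φ) : GLSSeq c lv {φ} {φ}
  | initBot (c lv) : GLSSeq c lv {Formula.bot} ∅
  | cut {lv Γ Δ} (φ) : GLSSeq true lv Γ (insert φ Δ) → GLSSeq true lv (insert φ Γ) Δ →
      GLSSeq true lv Γ Δ
  | weak {c lv Γ Δ Γ' Δ'} : Γ ⊆ Γ' → Δ ⊆ Δ' → GLSSeq c lv Γ Δ → GLSSeq c lv Γ' Δ'
  | impL {c lv Γ Δ φ ψ} : GLSSeq c lv Γ (insert φ Δ) → GLSSeq c lv (insert ψ Γ) Δ →
      GLSSeq c lv (insert (.imp φ ψ) Γ) Δ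
  | impR {c lv Γ Δ φ ψ} : GLSSeq c lv (insert φ Γ) (insert ψ Δ) →
      GLSSeq c lv Γ (insert (.imp φ ψ) Δ)
  | boxGL {c Γ φ} : GLSSeq c .one (Γ ∪ Γ.image .box ∪ {.box φ}) {φ} →
      GLSSeq c .one (Γ.image .box) {.box φ}
  | boxL {c Γ Δ} (φ) : GLSSeq c .two (insert φ Γ) Δ → GLSSeq c .two (insert (.box φ) Γ) Δ
  | lift {c Γ Δ} : GLSSeq c .one Γ Δ → GLSSeq c .two Γ Δ

/-- The sequent calculus GL_seq (on first-level sequents only). -/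
inductive GLSeq : Bool → Finset Formula → Finset Formula → Prop
  | init (c φ) : GLSeq c {φ} {φ}
  | initBot (c) : GLSeq c {Formula.bot} ∅
  | cut {Γ Δ} (φ) : GLSeq true Γ (insert φ Δ) → GLSeq true (insert φ Γ) Δ → GLSeq true Γ Δ
  | weak {c Γ Δ Γ' Δ'} : Γ ⊆ Γ' → Δ ⊆ Δ' → GLSeq c Γ Δ → GLSeq c Γ' Δ'
  | impL {c Γ Δ φ ψ} : GLSeq c Γ (insert φ Δ) → GLSeq c (insert ψ Γ) Δ →
      GLSeq c (insert (.imp φ ψ) Γ) Δ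
  | impR {c Γ Δ φ ψ} : GLSeq c (insert φ Γ) (insert ψ Δ) → GLSeq c Γ (insert (.imp φ ψ) Δ)
  | boxGL {c Γ φ} : GLSeq c (Γ ∪ Γ.image .box ∪ {.box φ}) {φ} → GLSeq c (Γ.image .box) {.box φ}

/-- Proof trees of GLS_seq (cut included). -/
inductive GLSTree : SeqLevel → Finset Formula → Finset Formula → Type
  | init (lv φ) : GLSTree lv {φ} {φ}
  | initBot (lv) : GLSTree lv {Formula.bot} ∅
  | cut {lv Γ Δ} (φ) : GLSTree lv Γ (insert φ Δ) → GLSTree lv (insert φ Γ) Δ → GLSTree lv Γ Δ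
  | weak {lv Γ Δ} (Γ' Δ' : Finset Formula) : Γ ⊆ Γ' → Δ ⊆ Δ' → GLSTree lv Γ Δ → GLSTree lv Γ' Δ'
  | impL {lv Γ Δ} (φ ψ) : GLSTree lv Γ (insert φ Δ) → GLSTree lv (insert ψ Γ) Δ →
      GLSTree lv (insert (.imp φ ψ) Γ) Δ
  | impR {lv Γ Δ} (φ ψ) : GLSTree lv (insert φ Γ) (insert ψ Δ) → GLSTree lv Γ (insert (.imp φ ψ) Δ)
  | boxGL (Γ φ) : GLSTree .one (Γ ∪ Γ.image .box ∪ {.box φ}) {φ} → GLSTree .one (Γ.image .box) {.box φ}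
  | boxL {Γ Δ} (φ) : GLSTree .two (insert φ Γ) Δ → GLSTree .two (insert (.box φ) Γ) Δ
  | lift {Γ Δ} : GLSTree .one Γ Δ → GLSTree .two Γ Δ

/-- The set of principal formulas of all (□L) rules occurring in a proof tree. -/
def GLSTree.principals : ∀ {lv Γ Δ}, GLSTree lv Γ Δ → Finset Formula
  | _, _, _, .init _ _ => ∅
  | _, _, _, .initBot _ => ∅
  | _, _, _, .cut _ t₁ t₂ => t₁.principals ∪ t₂.principals
  | _, _, _, .weak _ _ _ _ t => t.principals
  | _, _, _, .impL _ _ t₁ t₂ => t₁.principals ∪ t₂.principals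
  | _, _, _, .impR _ _ t => t.principals
  | _, _, _, .boxGL _ _ t => t.principals
  | _, _, _, .boxL φ t => insert (Formula.box φ) t.principals
  | _, _, _, .lift t => t.principals

/-- A proof tree bundled with its level and conclusion. -/
abbrev PGLSTree : Type :=
  (lv : SeqLevel) × (Γ : Finset Formula) × (Δ : Finset Formula) × GLSTree lv Γ Δ

/-- The set of subproofs of a proof tree (including the tree itself). -/
def GLSTree.subproofs {lv Γ Δ} (t : GLSTree lv Γ Δ) : Set PGLSTree :=
  insert ⟨lv, Γ, Δ, t⟩ <|
    match lv, Γ, Δ, t with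
    | _, _, _, .init _ _ => ∅
    | _, _, _, .initBot _ => ∅
    | _, _, _, .cut _ t₁ t₂ => t₁.subproofs ∪ t₂.subproofs
    | _, _, _, .weak _ _ _ _ t₁ => t₁.subproofs
    | _, _, _, .impL _ _ t₁ t₂ => t₁.subproofs ∪ t₂.subproofs
    | _, _, _, .impR _ _ t₁ => t₁.subproofs
    | _, _, _, .boxGL _ _ t₁ => t₁.subproofs
    | _, _, _, .boxL _ t₁ => t₁.subproofs
    | _, _, _, .lift t₁ => t₁.subproofs

/-- Kripke satisfaction over a frame `R` with atomic valuation `v`. -/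
def KSat {W : Type} (R : W → W → Prop) (v : W → ℕ → Prop) : Formula → W → Prop
  | .var p, w => v w p
  | .bot, _ => False
  | .imp φ ψ, w => KSat R v φ w → KSat R v ψ w
  | .box φ, w => ∀ w', R w w' → KSat R v φ w'

/-- A GL-model: a nonempty, transitive, converse well-founded Kripke model. -/
structure GLModel where
  World : Type
  ne : Nonempty World
  R : World → World → Prop
  trans : Transitive R
  cwf : ∀ f : ℕ → World, ¬ ∀ i, R (f i) (f (i + 1))
  val : World → ℕ → Prop

/-- Truth of a formula at a world of a GL-model. -/
def GLModel.sat (M : GLModel) (w : M.World) (φ : Formula) : Prop := KSat M.R M.val φ w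

/-- Truth of a sequent Γ ▸ Δ at a world: some γ ∈ Γ is false or some δ ∈ Δ is true. -/
def GLModel.seqTrue (M : GLModel) (w : M.World) (Γ Δ : Finset Formula) : Prop :=
  (∃ γ ∈ Γ, ¬ M.sat w γ) ∨ (∃ δ ∈ Δ, M.sat w δ)

/-- w is Σ-reflexive: □α → α is true at w for every □α ∈ Σ. -/
def GLModel.reflexiveFor (M : GLModel) (w : M.World) (S : Finset Formula) : Prop :=
  ∀ α : Formula, Formula.box α ∈ S → M.sat w ((Formula.box α).imp α)

/-- Saturation conditions (→L), (→R) for first-level sequents. -/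
def Saturated1 (Γ Δ : Finset Formula) : Prop :=
  (∀ φ ψ : Formula, φ.imp ψ ∈ Γ → φ ∈ Δ ∨ ψ ∈ Γ) ∧
  (∀ φ ψ : Formula, φ.imp ψ ∈ Δ → φ ∈ Γ ∧ ψ ∈ Δ)

/-- Saturation for second-level sequents: additionally (□L). -/
def Saturated2 (Γ Δ : Finset Formula) : Prop :=
  Saturated1 Γ Δ ∧ ∀ φ : Formula, Formula.box φ ∈ Γ → φ ∈ Γ

def Saturated : SeqLevel → Finset Formula → Finset Formula → Prop
  | .one => Saturated1
  | .two => Saturated2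

/-- The Hilbert system GL. -/
inductive GLHilbert : Formula → Prop
  | ax1 (φ ψ : Formula) : GLHilbert (φ.imp (ψ.imp φ))
  | ax2 (φ ψ χ : Formula) :
      GLHilbert ((φ.imp (ψ.imp χ)).imp ((φ.imp ψ).imp (φ.imp χ)))
  | ax3 (φ : Formula) : GLHilbert (((φ.imp .bot).imp .bot).imp φ)
  | axK (φ ψ : Formula) :
      GLHilbert ((Formula.box (φ.imp ψ)).imp ((Formula.box φ).imp (Formula.box ψ)))
  | axLob (φ : Formula) :
      GLHilbert ((Formula.box ((Formula.box φ).imp φ)).imp (Formula.box φ))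
  | mp {φ ψ} : GLHilbert (φ.imp ψ) → GLHilbert φ → GLHilbert ψ
  | nec {φ} : GLHilbert φ → GLHilbert (Formula.box φ)

/-- The Hilbert system GLS: theorems of GL and all □α → α, closed under modus ponens. -/
inductive GLSHilbert : Formula → Prop
  | gl {φ} : GLHilbert φ → GLSHilbert φ
  | refl (α : Formula) : GLSHilbert ((Formula.box α).imp α)
  | mp {φ ψ} : GLSHilbert (φ.imp ψ) → GLSHilbert φ → GLSHilbert ψ

/-- Conjunction (encoded with → and ⊥) of a list of formulas; empty conjunction is ⊤. -/
def Formula.conj : List Formula → Formula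
  | [] => Formula.bot.imp Formula.bot
  | φ :: l => ((φ.imp ((Formula.conj l).imp .bot)).imp .bot)

/-- Membership predicate for the canonical model: saturated first-level sequents over S
that are not cut-free provable in GLS_seq. -/
def W0pred (S : Finset Formula) (s : Finset Formula × Finset Formula) : Prop :=
  Saturated1 s.1 s.2 ∧ ¬ GLSSeq false SeqLevel.one s.1 s.2 ∧ s.1 ∪ s.2 ⊆ S

/-- Worlds of the canonical model. -/
def W0 (S : Finset Formula) : Type := {s : Finset Formula × Finset Formula // W0pred S s}

/-- Accessibility of the canonical model: (Γ⇒Δ) R₀ (Γ'⇒Δ') iff Γ_□ ⊊ Γ'_□ and Γ_□ ⊆ Γ'. -/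
def R0 (S : Finset Formula) (s t : W0 S) : Prop :=
  boxInv s.1.1 ⊂ boxInv t.1.1 ∧ boxInv s.1.1 ⊆ t.1.1

/-- Valuation of the canonical model: p is true at (Γ⇒Δ) iff p ∈ Γ. -/
def V0 (S : Finset Formula) (s : W0 S) (p : ℕ) : Prop := Formula.var p ∈ s.1.1

/-- The extended set of worlds W = W₀ ∪ ℕ. -/
def Wext (S : Finset Formula) : Type := W0 S ⊕ ℕ

/-- The extended accessibility relation, with distinguished world `wp` in W₀. -/
def Rext (S : Finset Formula) (wp : W0 S) : Wext S → Wext S → Prop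
  | Sum.inl x, Sum.inl y => R0 S x y
  | Sum.inr _, Sum.inl y => y = wp ∨ R0 S wp y
  | Sum.inr n, Sum.inr m => m < n
  | Sum.inl _, Sum.inr _ => False

/-- The extended valuation: worlds in ℕ behave like the distinguished world `wp`. -/
def Vext (S : Finset Formula) (wp : W0 S) : Wext S → ℕ → Prop
  | Sum.inl x, p => V0 S x p
  | Sum.inr _, p => V0 S wp p

/-! ### Auxiliary development for cut-free completeness -/

section Completeness

lemma mem_self_subf : ∀ φ : Formula, φ ∈ φ.subf
  | .var _ => by simp [Formula.subf]
  | .bot => by simp [Formula.subf]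
  | .imp _ _ => by simp [Formula.subf]
  | .box _ => by simp [Formula.subf]

lemma subf_subset (χ : Formula) : ∀ ψ ∈ χ.subf, ψ.subf ⊆ χ.subf := by
  induction χ with
  | var p =>
      intro ψ hψ
      simp only [Formula.subf, Finset.mem_singleton] at hψ
      subst hψ; exact Finset.Subset.refl _
  | bot =>
      intro ψ hψ
      simp only [Formula.subf, Finset.mem_singleton] at hψ
      subst hψ; exact Finset.Subset.refl _
  | imp φ₁ φ₂ ih1 ih2 =>
      intro ψ hψ
      simp only [Formula.subf, Finset.mem_insert, Finset.mem_union] at hψ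
      rcases hψ with rfl | h | h
      · exact Finset.Subset.refl _
      · refine (ih1 ψ h).trans ?_
        intro x hx
        simp only [Formula.subf, Finset.mem_insert, Finset.mem_union]
        exact Or.inr (Or.inl hx)
      · refine (ih2 ψ h).trans ?_
        intro x hx
        simp only [Formula.subf, Finset.mem_insert, Finset.mem_union]
        exact Or.inr (Or.inr hx)
  | box φ₁ ih =>
      intro ψ hψ
      simp only [Formula.subf, Finset.mem_insert] at hψ
      rcases hψ with rfl | h
      · exact Finset.Subset.refl _
      · refine (ih ψ h).trans ?_
        intro x hx
        simp only [Formula.subf, Finset.mem_insert]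
        exact Or.inr hx

/-- A subformula-closed set. -/
def SClosed (S : Finset Formula) : Prop := ∀ φ ∈ S, φ.subf ⊆ S

lemma SF_closed (Ψ Φ : Finset Formula) : SClosed (SF Ψ Φ) := by
  intro φ hφ ψ hψ
  simp only [SF, Finset.mem_biUnion] at hφ ⊢
  obtain ⟨χ, hχ, hsub⟩ := hφ
  exact ⟨χ, hχ, subf_subset χ φ hsub hψ⟩

lemma SClosed.imp_left {S : Finset Formula} {φ ψ : Formula} (h : SClosed S)
    (hm : Formula.imp φ ψ ∈ S) : φ ∈ S :=
  h _ hm (by simp [Formula.subf, mem_self_subf])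

lemma SClosed.imp_right {S : Finset Formula} {φ ψ : Formula} (h : SClosed S)
    (hm : Formula.imp φ ψ ∈ S) : ψ ∈ S :=
  h _ hm (by simp [Formula.subf, mem_self_subf])

lemma SClosed.box_mem {S : Finset Formula} {φ : Formula} (h : SClosed S)
    (hm : Formula.box φ ∈ S) : φ ∈ S :=
  h _ hm (by simp [Formula.subf, mem_self_subf])

lemma mem_boxInv {Θ : Finset Formula} {ψ : Formula} :
    ψ ∈ boxInv Θ ↔ Formula.box ψ ∈ Θ := by
  constructor
  · intro h
    simp only [boxInv, Finset.mem_image, Finset.mem_filter] at h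
    obtain ⟨χ, ⟨hχ, hb⟩, rfl⟩ := h
    cases χ with
    | box χ' => simpa [Formula.unbox] using hχ
    | var _ => simp [Formula.isBox] at hb
    | bot => simp [Formula.isBox] at hb
    | imp _ _ => simp [Formula.isBox] at hb
  · intro h
    simp only [boxInv, Finset.mem_image, Finset.mem_filter]
    exact ⟨Formula.box ψ, ⟨h, rfl⟩, rfl⟩

lemma GLSSeq.ofMem {c : Bool} {lv : SeqLevel} {Γ Δ : Finset Formula} {φ : Formula}
    (h1 : φ ∈ Γ) (h2 : φ ∈ Δ) : GLSSeq c lv Γ Δ :=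
  GLSSeq.weak (Finset.singleton_subset_iff.2 h1) (Finset.singleton_subset_iff.2 h2)
    (GLSSeq.init c lv φ)

lemma GLSSeq.ofBot {c : Bool} {lv : SeqLevel} {Γ Δ : Finset Formula}
    (h1 : Formula.bot ∈ Γ) : GLSSeq c lv Γ Δ :=
  GLSSeq.weak (Finset.singleton_subset_iff.2 h1) (Finset.empty_subset _)
    (GLSSeq.initBot c lv)

lemma sdiff_insert_card_lt {S Γ : Finset Formula} {φ : Formula} (hφ : φ ∈ S) (h : φ ∉ Γ) :
    (S \ insert φ Γ).card < (S \ Γ).card := by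
  apply Finset.card_lt_card
  rw [Finset.ssubset_def]
  constructor
  · exact Finset.sdiff_subset_sdiff (le_refl _) (Finset.subset_insert _ _)
  · intro hc
    have h1 : φ ∈ S \ Γ := Finset.mem_sdiff.2 ⟨hφ, h⟩
    have := hc h1
    simp at this

lemma sdiff_insert_card_le (S Γ : Finset Formula) (φ : Formula) :
    (S \ insert φ Γ).card ≤ (S \ Γ).card :=
  Finset.card_le_card (Finset.sdiff_subset_sdiff (le_refl _) (Finset.subset_insert _ _))

lemma ext_of_not_sat1 {S : Finset Formula} (hS : SClosed S) {lv : SeqLevel}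
    {Γ Δ : Finset Formula} (hsub : Γ ∪ Δ ⊆ S) (hnp : ¬ GLSSeq false lv Γ Δ)
    (h : ¬ Saturated1 Γ Δ) :
    ∃ Γ₁ Δ₁, Γ ⊆ Γ₁ ∧ Δ ⊆ Δ₁ ∧ Γ₁ ∪ Δ₁ ⊆ S ∧ ¬ GLSSeq false lv Γ₁ Δ₁ ∧
      (S \ Γ₁).card + (S \ Δ₁).card < (S \ Γ).card + (S \ Δ).card := by
  have hΓS : Γ ⊆ S := (Finset.union_subset_iff.1 hsub).1
  have hΔS : Δ ⊆ S := (Finset.union_subset_iff.1 hsub).2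
  rw [Saturated1, not_and_or] at h
  rcases h with h | h
  · push_neg at h
    obtain ⟨φ, ψ, himp, h1, h2⟩ := h
    have hφS : φ ∈ S := hS.imp_left (hΓS himp)
    have hψS : ψ ∈ S := hS.imp_right (hΓS himp)
    by_cases hp : GLSSeq false lv Γ (insert φ Δ)
    · refine ⟨insert ψ Γ, Δ, Finset.subset_insert _ _, Finset.Subset.refl _, ?_, ?_, ?_⟩
      · exact Finset.union_subset (Finset.insert_subset hψS hΓS) hΔS
      · intro hq
        have := GLSSeq.impL hp hq
        rw [Finset.insert_eq_self.2 himp] at this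
        exact hnp this
      · have := sdiff_insert_card_lt hψS h2
        omega
    · refine ⟨Γ, insert φ Δ, Finset.Subset.refl _, Finset.subset_insert _ _, ?_, hp, ?_⟩
      · exact Finset.union_subset hΓS (Finset.insert_subset hφS hΔS)
      · have := sdiff_insert_card_lt hφS h1
        omega
  · push_neg at h
    obtain ⟨φ, ψ, himp, hviol⟩ := h
    have hφS : φ ∈ S := hS.imp_left (hΔS himp)
    have hψS : ψ ∈ S := hS.imp_right (hΔS himp)
    have hp : ¬ GLSSeq false lv (insert φ Γ) (insert ψ Δ) := by
      intro hq
      have := GLSSeq.impR hq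
      rw [Finset.insert_eq_self.2 himp] at this
      exact hnp this
    refine ⟨insert φ Γ, insert ψ Δ, Finset.subset_insert _ _, Finset.subset_insert _ _,
      ?_, hp, ?_⟩
    · exact Finset.union_subset (Finset.insert_subset hφS hΓS)
        (Finset.insert_subset hψS hΔS)
    · have hle1 := sdiff_insert_card_le S Γ φ
      have hle2 := sdiff_insert_card_le S Δ ψ
      by_cases hφΓ : φ ∈ Γ
      · have hψΔ : ψ ∉ Δ := hviol hφΓ
        have := sdiff_insert_card_lt hψS hψΔ
        omega
      · have := sdiff_insert_card_lt hφS hφΓ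
        omega

lemma saturate (S : Finset Formula) (hS : SClosed S) (lv : SeqLevel) :
    ∀ n Γ Δ, (S \ Γ).card + (S \ Δ).card ≤ n → Γ ∪ Δ ⊆ S → ¬ GLSSeq false lv Γ Δ →
    ∃ Γ' Δ', Γ ⊆ Γ' ∧ Δ ⊆ Δ' ∧ Γ' ∪ Δ' ⊆ S ∧ Saturated lv Γ' Δ' ∧
      ¬ GLSSeq false lv Γ' Δ' := by
  intro n
  induction n with
  | zero =>
      intro Γ Δ hcard hsub hnp
      have h1 : S \ Γ = ∅ := Finset.card_eq_zero.1 (by omega)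
      have h2 : S \ Δ = ∅ := Finset.card_eq_zero.1 (by omega)
      have hSΓ : S ⊆ Γ := by rwa [Finset.sdiff_eq_empty_iff_subset] at h1
      have hSΔ : S ⊆ Δ := by rwa [Finset.sdiff_eq_empty_iff_subset] at h2
      rcases Finset.eq_empty_or_nonempty S with hE | ⟨φ, hφ⟩
      · have hΓ : Γ = ∅ := Finset.subset_empty.1 (hE ▸ (Finset.union_subset_iff.1 hsub).1)
        have hΔ : Δ = ∅ := Finset.subset_empty.1 (hE ▸ (Finset.union_subset_iff.1 hsub).2)
        subst hΓ; subst hΔ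
        refine ⟨∅, ∅, Finset.Subset.refl _, Finset.Subset.refl _, by simp, ?_, hnp⟩
        cases lv
        · exact ⟨fun φ ψ h => by simp at h, fun φ ψ h => by simp at h⟩
        · exact ⟨⟨fun φ ψ h => by simp at h, fun φ ψ h => by simp at h⟩,
            fun φ h => by simp at h⟩
      · exact absurd (GLSSeq.ofMem (hSΓ hφ) (hSΔ hφ)) hnp
  | succ n ih =>
      intro Γ Δ hcard hsub hnp
      by_cases hsat : Saturated lv Γ Δ
      · exact ⟨Γ, Δ, Finset.Subset.refl _, Finset.Subset.refl _, hsub, hsat, hnp⟩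
      cases lv with
      | one =>
          have h1 : ¬ Saturated1 Γ Δ := hsat
          obtain ⟨Γ₁, Δ₁, ha, hb, hc, hd, he⟩ := ext_of_not_sat1 hS hsub hnp h1
          obtain ⟨Γ', Δ', g1, g2, g3, g4, g5⟩ := ih Γ₁ Δ₁ (by omega) hc hd
          exact ⟨Γ', Δ', ha.trans g1, hb.trans g2, g3, g4, g5⟩
      | two =>
          have h1 : ¬ Saturated2 Γ Δ := hsat
          rw [Saturated2, not_and_or] at h1
          rcases h1 with h1 | h1
          · obtain ⟨Γ₁, Δ₁, ha, hb, hc, hd, he⟩ := ext_of_not_sat1 hS hsub hnp h1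
            obtain ⟨Γ', Δ', g1, g2, g3, g4, g5⟩ := ih Γ₁ Δ₁ (by omega) hc hd
            exact ⟨Γ', Δ', ha.trans g1, hb.trans g2, g3, g4, g5⟩
          · push_neg at h1
            obtain ⟨φ, hbox, hφΓ⟩ := h1
            have hφS : φ ∈ S := hS.box_mem ((Finset.union_subset_iff.1 hsub).1 hbox)
            have hp : ¬ GLSSeq false SeqLevel.two (insert φ Γ) Δ := by
              intro hq
              have := GLSSeq.boxL φ hq
              rw [Finset.insert_eq_self.2 hbox] at this
              exact hnp this
            have hmlt := sdiff_insert_card_lt hφS hφΓ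
            obtain ⟨Γ', Δ', g1, g2, g3, g4, g5⟩ := ih (insert φ Γ) Δ (by omega)
              (Finset.union_subset
                (Finset.insert_subset hφS (Finset.union_subset_iff.1 hsub).1)
                (Finset.union_subset_iff.1 hsub).2) hp
            exact ⟨Γ', Δ', (Finset.subset_insert _ _).trans g1, g2, g3, g4, g5⟩

lemma W0.disj {S : Finset Formula} (x : W0 S) {φ : Formula}
    (h1 : φ ∈ x.1.1) (h2 : φ ∈ x.1.2) : False :=
  x.2.2.1 (GLSSeq.ofMem h1 h2)

lemma boxInv_subset_S {S : Finset Formula} (hS : SClosed S) (x : W0 S) :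
    boxInv x.1.1 ⊆ S :=
  fun ψ hψ => hS.box_mem (x.2.2.2 (Finset.mem_union_left _ (mem_boxInv.1 hψ)))

lemma box_counterexample {S : Finset Formula} (hS : SClosed S) (x : W0 S) {φ : Formula}
    (hφ : Formula.box φ ∈ x.1.2) :
    ∃ y : W0 S, R0 S x y ∧ φ ∈ y.1.2 := by
  obtain ⟨⟨Γ, Δ⟩, hsat, hnp, hsub⟩ := x
  simp only at hφ ⊢
  set B := boxInv Γ with hB
  have hBS : B ⊆ S := fun ψ hψ =>
    hS.box_mem (hsub (Finset.mem_union_left _ (mem_boxInv.1 hψ)))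
  have hBoxSub : B.image Formula.box ⊆ Γ := by
    intro χ hχ
    simp only [Finset.mem_image] at hχ
    obtain ⟨ψ, hψ, rfl⟩ := hχ
    exact mem_boxInv.1 hψ
  have hboxφS : Formula.box φ ∈ S := hsub (Finset.mem_union_right _ hφ)
  have hφS : φ ∈ S := hS.box_mem hboxφS
  have hnp' : ¬ GLSSeq false SeqLevel.one (B ∪ B.image Formula.box ∪ {Formula.box φ}) {φ} := by
    intro h
    exact hnp (GLSSeq.weak hBoxSub (Finset.singleton_subset_iff.2 hφ) (GLSSeq.boxGL h))
  have hsub' : (B ∪ B.image Formula.box ∪ {Formula.box φ}) ∪ {φ} ⊆ S := by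
    refine Finset.union_subset (Finset.union_subset (Finset.union_subset hBS ?_) ?_) ?_
    · exact hBoxSub.trans fun χ hχ => hsub (Finset.mem_union_left _ hχ)
    · exact Finset.singleton_subset_iff.2 hboxφS
    · exact Finset.singleton_subset_iff.2 hφS
  obtain ⟨Γ', Δ', g1, g2, g3, g4, g5⟩ := saturate S hS SeqLevel.one _ _ _ (le_refl _) hsub' hnp'
  have hBΓ' : B ⊆ Γ' := (Finset.subset_union_left.trans Finset.subset_union_left).trans g1
  have hboxφΓ' : Formula.box φ ∈ Γ' := g1 (by simp)
  have hφΔ' : φ ∈ Δ' := g2 (by simp)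
  have hφnB : φ ∉ B := by
    intro hc
    exact hnp (GLSSeq.ofMem (mem_boxInv.1 hc) hφ)
  refine ⟨⟨(Γ', Δ'), g4, g5, g3⟩, ⟨?_, hBΓ'⟩, hφΔ'⟩
  rw [Finset.ssubset_def]
  constructor
  · intro ψ hψ
    exact mem_boxInv.2 (g1 (Finset.mem_union_left _
      (Finset.mem_union_right _ (Finset.mem_image_of_mem _ hψ))))
  · intro hc
    exact hφnB (hc (mem_boxInv.2 hboxφΓ'))

lemma truth_lemma {S : Finset Formula} (hS : SClosed S) (wp : W0 S)
    (hwp : ∀ φ : Formula, Formula.box φ ∈ wp.1.1 → φ ∈ wp.1.1) :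
    ∀ φ : Formula, φ ∈ S →
      (∀ x : W0 S, (φ ∈ x.1.1 → KSat (Rext S wp) (Vext S wp) φ (Sum.inl x)) ∧
        (φ ∈ x.1.2 → ¬ KSat (Rext S wp) (Vext S wp) φ (Sum.inl x))) ∧
      (∀ n : ℕ, (φ ∈ wp.1.1 → KSat (Rext S wp) (Vext S wp) φ (Sum.inr n)) ∧
        (φ ∈ wp.1.2 → ¬ KSat (Rext S wp) (Vext S wp) φ (Sum.inr n))) := by
  intro φ
  induction φ with
  | var p =>
      intro _
      constructor
      · intro x
        constructor
        · intro h; exact h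
        · intro h hc; exact W0.disj x hc h
      · intro n
        constructor
        · intro h; exact h
        · intro h hc; exact W0.disj wp hc h
  | bot =>
      intro _
      constructor
      · intro x
        exact ⟨fun h => absurd (GLSSeq.ofBot h : GLSSeq false SeqLevel.one x.1.1 x.1.2)
          x.2.2.1, fun _ hc => hc⟩
      · intro n
        exact ⟨fun h => absurd (GLSSeq.ofBot h : GLSSeq false SeqLevel.one wp.1.1 wp.1.2)
          wp.2.2.1, fun _ hc => hc⟩
  | imp φ ψ ihφ ihψ =>
      intro hmem
      have hφS : φ ∈ S := hS.imp_left hmem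
      have hψS : ψ ∈ S := hS.imp_right hmem
      constructor
      · intro x
        constructor
        · intro h hsatφ
          rcases x.2.1.1 φ ψ h with hd | hg
          · exact absurd hsatφ (((ihφ hφS).1 x).2 hd)
          · exact ((ihψ hψS).1 x).1 hg
        · intro h hc
          obtain ⟨h1, h2⟩ := x.2.1.2 φ ψ h
          exact ((ihψ hψS).1 x).2 h2 (hc (((ihφ hφS).1 x).1 h1))
      · intro n
        constructor
        · intro h hsatφ
          rcases wp.2.1.1 φ ψ h with hd | hg
          · exact absurd hsatφ (((ihφ hφS).2 n).2 hd)
          · exact ((ihψ hψS).2 n).1 hg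
        · intro h hc
          obtain ⟨h1, h2⟩ := wp.2.1.2 φ ψ h
          exact ((ihψ hψS).2 n).2 h2 (hc (((ihφ hφS).2 n).1 h1))
  | box φ ihφ =>
      intro hmem
      have hφS : φ ∈ S := hS.box_mem hmem
      constructor
      · intro x
        constructor
        · intro h w' hw'
          cases w' with
          | inl y =>
              have hR : R0 S x y := hw'
              exact ((ihφ hφS).1 y).1 (hR.2 (mem_boxInv.2 h))
          | inr m => exact absurd hw' (fun hc => hc)
        · intro h hc
          obtain ⟨y, hR, hφy⟩ := box_counterexample hS x h
          exact ((ihφ hφS).1 y).2 hφy (hc (Sum.inl y) hR)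
      · intro n
        constructor
        · intro h w' hw'
          cases w' with
          | inl y =>
              rcases (hw' : y = wp ∨ R0 S wp y) with rfl | hR
              · exact ((ihφ hφS).1 y).1 (hwp φ h)
              · exact ((ihφ hφS).1 y).1 (hR.2 (mem_boxInv.2 h))
          | inr m =>
              exact ((ihφ hφS).2 m).1 (hwp φ h)
        · intro h hc
          obtain ⟨y, hR, hφy⟩ := box_counterexample hS wp h
          exact ((ihφ hφS).1 y).2 hφy (hc (Sum.inl y) (Or.inr hR))

lemma R0_trans {S : Finset Formula} {x y z : W0 S} (h1 : R0 S x y) (h2 : R0 S y z) :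
    R0 S x z :=
  ⟨h1.1.trans h2.1, h1.1.subset.trans h2.2⟩

lemma Rext_trans {S : Finset Formula} {wp : W0 S} : Transitive (Rext S wp) := by
  intro a b c hab hbc
  cases a with
  | inl x =>
      cases b with
      | inl y =>
          cases c with
          | inl z => exact R0_trans hab hbc
          | inr m => exact absurd hbc (fun hc => hc)
      | inr m => exact absurd hab (fun hc => hc)
  | inr n =>
      cases b with
      | inl y =>
          cases c with
          | inl z =>
              rcases (hab : y = wp ∨ R0 S wp y) with rfl | hR
              · exact Or.inr hbc
              · exact Or.inr (R0_trans hR hbc)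
          | inr m => exact absurd hbc (fun hc => hc)
      | inr m =>
          cases c with
          | inl z => exact hbc
          | inr k => exact lt_trans hbc hab

def wMeasure (S : Finset Formula) : Wext S → ℕ
  | Sum.inl x => S.card - (boxInv x.1.1).card
  | Sum.inr n => S.card + 1 + n

lemma Rext_measure {S : Finset Formula} {wp : W0 S} (hS : SClosed S) {a b : Wext S}
    (h : Rext S wp a b) : wMeasure S b < wMeasure S a := by
  cases a with
  | inl x =>
      cases b with
      | inl y =>
          have h1 : (boxInv x.1.1).card < (boxInv y.1.1).card :=
            Finset.card_lt_card (h : R0 S x y).1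
          have h2 : (boxInv y.1.1).card ≤ S.card :=
            Finset.card_le_card (boxInv_subset_S hS y)
          simp only [wMeasure]
          omega
      | inr m => exact absurd h (fun hc => hc)
  | inr n =>
      cases b with
      | inl y =>
          have h2 : (boxInv y.1.1).card ≤ S.card :=
            Finset.card_le_card (boxInv_subset_S hS y)
          simp only [wMeasure]
          omega
      | inr m =>
          have : m < n := h
          simp only [wMeasure]
          omega

lemma Rext_cwf {S : Finset Formula} {wp : W0 S} (hS : SClosed S) :
    ∀ f : ℕ → Wext S, ¬ ∀ i, Rext S wp (f i) (f (i + 1)) := by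
  intro f hf
  have key : ∀ i, wMeasure S (f i) + i ≤ wMeasure S (f 0) := by
    intro i
    induction i with
    | zero => omega
    | succ i ih =>
        have := Rext_measure hS (hf i)
        omega
  have := key (wMeasure S (f 0) + 1)
  omega

lemma gls_main (Ψ Φ : Finset Formula) (hnp : ¬ GLSSeq false SeqLevel.two Ψ Φ) :
    ∃ (M : GLModel) (f : ℕ → M.World),
      (∀ i, M.R (f (i + 1)) (f i)) ∧ ∀ i, ¬ M.seqTrue (f i) Ψ Φ := by
  set S := SF Ψ Φ with hSdef
  have hS : SClosed S := SF_closed Ψ Φ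
  have hsub : Ψ ∪ Φ ⊆ S := fun χ hχ => Finset.mem_biUnion.2 ⟨χ, hχ, mem_self_subf χ⟩
  obtain ⟨Γ, Δ, hΨΓ, hΦΔ, hΓΔS, hsat, hnp'⟩ :=
    saturate S hS SeqLevel.two _ Ψ Φ (le_refl _) hsub hnp
  have hsat2 : Saturated2 Γ Δ := hsat
  have hΨΓ' : Ψ ⊆ Γ := hΨΓ
  have hΦΔ' : Φ ⊆ Δ := hΦΔ
  let wp : W0 S := ⟨(Γ, Δ), hsat2.1, fun h => hnp' (GLSSeq.lift h), hΓΔS⟩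
  have htruth := truth_lemma hS wp hsat2.2
  refine ⟨⟨Wext S, ⟨Sum.inr 0⟩, Rext S wp, Rext_trans, Rext_cwf hS, Vext S wp⟩,
    fun i => Sum.inr i, fun i => Nat.lt_succ_self i, ?_⟩
  intro i hT
  rcases hT with ⟨γ, hγ, hne⟩ | ⟨δ, hδ, hs⟩
  · exact hne (((htruth γ (hsub (Finset.mem_union_left _ hγ))).2 i).1 (hΨΓ' hγ))
  · exact ((htruth δ (hsub (Finset.mem_union_right _ hδ))).2 i).2 (hΦΔ' hδ) hs

end Completeness

/-- Cut-free completeness of GLS_seq: if Ψ ⇛ Φ is not cut-free provable then there are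
a GL-model and an infinitely descending sequence at all of whose worlds Ψ ⇛ Φ is false;
equivalently, if on every infinitely descending sequence of every GL-model the sequent
Ψ ⇛ Φ is true somewhere, then Ψ ⇛ Φ is cut-free provable. -/
theorem gls_cutfree_completeness (Ψ Φ : Finset Formula) :
    (¬ GLSSeq false SeqLevel.two Ψ Φ →
      ∃ (M : GLModel) (f : ℕ → M.World),
        (∀ i, M.R (f (i + 1)) (f i)) ∧ ∀ i, ¬ M.seqTrue (f i) Ψ Φ) ∧
    ((∀ (M : GLModel) (f : ℕ → M.World), (∀ i, M.R (f (i + 1)) (f i)) →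
        ∃ i, M.seqTrue (f i) Ψ Φ) →
      GLSSeq false SeqLevel.two Ψ Φ) := by
  constructor
  · exact gls_main Ψ Φ
  · intro H
    by_contra hnp
    obtain ⟨M, f, hchain, hfalse⟩ := gls_main Ψ Φ hnp
    obtain ⟨i, hi⟩ := H M f hchain
    exact hfalse i hi
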